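/- In the extended FEO procedure with features partitioned as (X_s, V_s), where X_s and V_s are uncorrelated for each s and var[X_s], var[V_s] have full rank: the coefficient of X_S − μ_S in the projection of Y_S onto {1, U_1(S),…,U_{S̄−1}(S), X_S − μ_S, V_S − ν_S, U_1(S)V_S,…,U_{S̄}(S)V_S} equals β_F = var[X_S − μ_S]⁻¹cov[X_S − μ_S, Y_S], and the coefficient of V_S − ν_S equals the average treatment effect γ̄ = Σ_s p_s γ_s. -/

import Mathlib

/-!
Take the interaction coefficients equal to the bank effects `γ_s`: since
`∑ᵢ γᵢ Uᵢ(s) = γ_s − γ̄`, the `V`-part of the fit becomes `γ_S ⬝ V − γ̄ ⬝ ν_S`, and intercept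
and dummies can reproduce any function of `S`, here `α_s + β_s ⬝ μ_s + γ̄ ⬝ ν_s`. The residual
on bank `s` is then `(β_F − β_s) ⬝ (X − μ_s) − ε`. On bank `s` every regressor is an affine
function of `X − μ_s` and `V − ν_s`, so the within-bank orthogonality assumptions reduce its
inner product with the residual to `∑_s p_s (β_F − β_s)ᵀ Σ_s b`. This vanishes by the normal
equation `var[X_S − μ_S] β_F = cov[X_S − μ_S, Y_S]`, where `var[X_S − μ_S] = ∑_s p_s Σ_s` is
positive definite. A residual orthogonal to every regressor is a least-squares residual.
-/

open MeasureTheory Matrix Finset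

section SecondMoments

variable {Ω ι κ : Type*} [MeasurableSpace Ω] {μ : Measure Ω}

noncomputable def secondMomentMatrix (μ : Measure Ω) (z : Ω → ι → ℝ) : Matrix ι ι ℝ :=
  of fun i j => ∫ ω, z ω i * z ω j ∂μ

@[simp]
theorem secondMomentMatrix_apply (z : Ω → ι → ℝ) (i j : ι) :
    secondMomentMatrix μ z i j = ∫ ω, z ω i * z ω j ∂μ :=
  rfl

theorem MeasureTheory.MemLp.restrict_of_eqOn {p : ENNReal} {A : Set Ω} (hA : MeasurableSet A)
    {f g : Ω → ℝ} (hf : MemLp f p μ) (hfg : Set.EqOn f g A) : MemLp g p (μ.restrict A) :=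
  (hf.restrict A).ae_eq ((ae_restrict_iff' hA).2 (ae_of_all _ hfg))

theorem memLp_two_of_integrable_sq [IsFiniteMeasure μ] {f : Ω → ℝ}
    (hf : Integrable (fun ω => f ω ^ 2) μ) (hf1 : Integrable (fun ω => (f ω + 1) ^ 2) μ) :
    MemLp f 2 μ := by
  -- `2 f + 1` is a difference of integrable functions; this supplies the measurability of `f`.
  have hint : Integrable f μ := by
    have h := ((hf1.sub hf).sub (integrable_const (1 : ℝ))).div_const 2
    refine h.congr (ae_of_all _ fun ω => ?_)
    simp only [Pi.sub_apply]
    ring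
  exact (memLp_two_iff_integrable_sq hint.aestronglyMeasurable).2 hf

variable [Fintype ι] [Fintype κ]

theorem integral_eq_sum_setIntegral_fiber [MeasurableSpace ι] [MeasurableSingletonClass ι]
    {S : Ω → ι} (hS : Measurable S) {f : Ω → ℝ} (hf : Integrable f μ) :
    ∫ ω, f ω ∂μ = ∑ s, ∫ ω in {ω | S ω = s}, f ω ∂μ := by
  have hcover : (⋃ s, {ω | S ω = s}) = Set.univ := by ext ω; simp
  have hdisj : Pairwise (Function.onFun Disjoint fun s => {ω | S ω = s}) :=
    fun s t hst => Set.disjoint_left.2 fun ω hs ht => hst (hs.symm.trans ht)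
  rw [← setIntegral_univ, ← hcover, integral_iUnion_fintype (s := fun s => {ω | S ω = s})
    (fun s => hS (measurableSet_singleton s)) hdisj fun _ => hf.integrableOn]

theorem memLp_dotProduct {p : ENNReal} {z : Ω → ι → ℝ} (hz : ∀ i, MemLp (fun ω => z ω i) p μ)
    (b : ι → ℝ) : MemLp (fun ω => b ⬝ᵥ z ω) p μ := by
  simpa only [dotProduct, Finset.sum_fn] using
    memLp_finsetSum' univ fun i _ => (hz i).const_mul (b i)

theorem integral_mul_dotProduct {φ : Ω → ℝ} {z : Ω → ι → ℝ}
    (h : ∀ i, Integrable (fun ω => φ ω * z ω i) μ) (b : ι → ℝ) :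
    ∫ ω, φ ω * (b ⬝ᵥ z ω) ∂μ = b ⬝ᵥ fun i => ∫ ω, φ ω * z ω i ∂μ := by
  have hpt : ∀ ω, φ ω * (b ⬝ᵥ z ω) = ∑ i, b i * (φ ω * z ω i) := fun ω => by
    simp only [dotProduct, Finset.mul_sum]
    exact Finset.sum_congr rfl fun i _ => by ring
  rw [integral_congr_ae (ae_of_all _ hpt), integral_finsetSum _ fun i _ => (h i).const_mul (b i)]
  simp only [integral_const_mul, dotProduct]

theorem integral_dotProduct_mul {φ : Ω → ℝ} {z : Ω → ι → ℝ}
    (h : ∀ i, Integrable (fun ω => z ω i * φ ω) μ) (u : ι → ℝ) :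
    ∫ ω, (u ⬝ᵥ z ω) * φ ω ∂μ = u ⬝ᵥ fun i => ∫ ω, z ω i * φ ω ∂μ := by
  simp_rw [mul_comm _ (φ _)]
  exact integral_mul_dotProduct (by simpa only [mul_comm] using h) u

theorem integral_dotProduct_mul_dotProduct [IsFiniteMeasure μ] {z : Ω → ι → ℝ}
    (hz : ∀ i, MemLp (fun ω => z ω i) 2 μ) (u v : ι → ℝ) :
    ∫ ω, (u ⬝ᵥ z ω) * (v ⬝ᵥ z ω) ∂μ = u ⬝ᵥ (secondMomentMatrix μ z *ᵥ v) := by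
  rw [integral_dotProduct_mul fun i => (hz i).integrable_mul (memLp_dotProduct hz v)]
  congr 1
  ext i
  rw [integral_mul_dotProduct fun j => (hz i).integrable_mul (hz j), dotProduct_comm]
  rfl

theorem posSemidef_secondMomentMatrix [IsFiniteMeasure μ] {z : Ω → ι → ℝ}
    (hz : ∀ i, MemLp (fun ω => z ω i) 2 μ) : (secondMomentMatrix μ z).PosSemidef := by
  refine .of_dotProduct_mulVec_nonneg ?_ fun x => ?_
  · ext i j
    simp only [conjTranspose_apply, star_trivial, secondMomentMatrix, of_apply, mul_comm]
  · rw [star_trivial, ← integral_dotProduct_mul_dotProduct hz]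
    exact integral_nonneg fun ω => mul_self_nonneg _

theorem integral_mul_affine_of_orthogonal [IsFiniteMeasure μ] {φ : Ω → ℝ} {z : Ω → ι → ℝ}
    {w : Ω → κ → ℝ} (hφ : MemLp φ 2 μ) (hz : ∀ i, MemLp (fun ω => z ω i) 2 μ)
    (hw : ∀ k, MemLp (fun ω => w ω k) 2 μ) (hφ0 : ∫ ω, φ ω ∂μ = 0)
    (hφw : ∀ k, ∫ ω, φ ω * w ω k ∂μ = 0) (A : ℝ) (b : ι → ℝ) (G : κ → ℝ) :
    ∫ ω, φ ω * (A + b ⬝ᵥ z ω + G ⬝ᵥ w ω) ∂μ = b ⬝ᵥ fun i => ∫ ω, φ ω * z ω i ∂μ := by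
  have hA : Integrable (fun ω => φ ω * A) μ := (hφ.integrable one_le_two).mul_const A
  have hb : Integrable (fun ω => φ ω * b ⬝ᵥ z ω) μ := hφ.integrable_mul (memLp_dotProduct hz b)
  have hG : Integrable (fun ω => φ ω * G ⬝ᵥ w ω) μ := hφ.integrable_mul (memLp_dotProduct hw G)
  have hAb : Integrable (fun ω => φ ω * A + φ ω * b ⬝ᵥ z ω) μ := hA.add hb
  simp only [mul_add]
  rw [integral_add hAb hG, integral_add hA hb, integral_mul_const, hφ0,
    integral_mul_dotProduct fun i => hφ.integrable_mul (hz i),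
    integral_mul_dotProduct fun k => hφ.integrable_mul (hw k)]
  simp [hφw]

theorem integral_sq_le_integral_add_sq [IsFiniteMeasure μ] {r h : Ω → ℝ} (hr : MemLp r 2 μ)
    (hh : MemLp h 2 μ) (horth : ∫ ω, r ω * h ω ∂μ = 0) :
    ∫ ω, r ω ^ 2 ∂μ ≤ ∫ ω, (r ω + h ω) ^ 2 ∂μ := by
  have hrr := (memLp_two_iff_integrable_sq hr.aestronglyMeasurable).1 hr
  have hhh := (memLp_two_iff_integrable_sq hh.aestronglyMeasurable).1 hh
  have hrh : Integrable (fun ω => 2 * (r ω * h ω)) μ := (hr.integrable_mul hh).const_mul 2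
  have hhrh : Integrable (fun ω => h ω ^ 2 + 2 * (r ω * h ω)) μ := hhh.add hrh
  have hexpand : ∫ ω, (r ω + h ω) ^ 2 ∂μ = ∫ ω, r ω ^ 2 ∂μ + ∫ ω, h ω ^ 2 ∂μ := by
    simp_rw [add_sq', add_assoc, mul_assoc]
    rw [integral_add hrr hhrh, integral_add hhh hrh, integral_const_mul, horth, mul_zero,
      add_zero]
  rw [hexpand]
  linarith [integral_nonneg (μ := μ) (f := fun ω => h ω ^ 2) fun ω => sq_nonneg (h ω)]

/-- `w` need not be centred: its mean is absorbed by the intercept of an affine regressor. -/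
structure OrthogonalDesign (μ : Measure Ω) (z : Ω → ι → ℝ) (w : Ω → κ → ℝ) (ε : Ω → ℝ) :
    Prop where
  memLp_z : ∀ i, MemLp (fun ω => z ω i) 2 μ
  memLp_w : ∀ k, MemLp (fun ω => w ω k) 2 μ
  memLp_noise : MemLp ε 2 μ
  integral_z : ∀ i, ∫ ω, z ω i ∂μ = 0
  integral_z_mul_w : ∀ i k, ∫ ω, z ω i * w ω k ∂μ = 0
  integral_noise : ∫ ω, ε ω ∂μ = 0
  integral_z_mul_noise : ∀ i, ∫ ω, z ω i * ε ω ∂μ = 0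
  integral_w_mul_noise : ∀ k, ∫ ω, w ω k * ε ω ∂μ = 0

namespace OrthogonalDesign

variable [IsFiniteMeasure μ] {z : Ω → ι → ℝ} {w : Ω → κ → ℝ} {ε : Ω → ℝ}
  (A : ℝ) (b : ι → ℝ) (G : κ → ℝ)

theorem memLp_affine (hD : OrthogonalDesign μ z w ε) :
    MemLp (fun ω => A + b ⬝ᵥ z ω + G ⬝ᵥ w ω) 2 μ :=
  ((memLp_const A).add (memLp_dotProduct hD.memLp_z b)).add (memLp_dotProduct hD.memLp_w G)

theorem integral_z_mul_affine (hD : OrthogonalDesign μ z w ε) (i : ι) :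
    ∫ ω, z ω i * (A + b ⬝ᵥ z ω + G ⬝ᵥ w ω) ∂μ = (secondMomentMatrix μ z *ᵥ b) i := by
  rw [integral_mul_affine_of_orthogonal (hD.memLp_z i) hD.memLp_z hD.memLp_w (hD.integral_z i)
    (hD.integral_z_mul_w i), dotProduct_comm]
  rfl

theorem integral_noise_mul_affine (hD : OrthogonalDesign μ z w ε) :
    ∫ ω, ε ω * (A + b ⬝ᵥ z ω + G ⬝ᵥ w ω) ∂μ = 0 := by
  rw [integral_mul_affine_of_orthogonal hD.memLp_noise hD.memLp_z hD.memLp_w hD.integral_noise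
    (fun k => by simpa only [mul_comm] using hD.integral_w_mul_noise k)]
  simp [mul_comm, hD.integral_z_mul_noise]

theorem integral_z_mul_affine_add_noise (hD : OrthogonalDesign μ z w ε) (i : ι) :
    ∫ ω, z ω i * (A + b ⬝ᵥ z ω + G ⬝ᵥ w ω + ε ω) ∂μ = (secondMomentMatrix μ z *ᵥ b) i := by
  have hf : Integrable (fun ω => z ω i * (A + b ⬝ᵥ z ω + G ⬝ᵥ w ω)) μ :=
    (hD.memLp_z i).integrable_mul (hD.memLp_affine A b G)
  have hε : Integrable (fun ω => z ω i * ε ω) μ := (hD.memLp_z i).integrable_mul hD.memLp_noise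
  simp only [mul_add (z _ i) _ (ε _)]
  rw [integral_add hf hε, hD.integral_z_mul_affine, hD.integral_z_mul_noise, add_zero]

theorem integral_residual_mul_affine (hD : OrthogonalDesign μ z w ε) (u : ι → ℝ) :
    ∫ ω, (u ⬝ᵥ z ω - ε ω) * (A + b ⬝ᵥ z ω + G ⬝ᵥ w ω) ∂μ
      = u ⬝ᵥ (secondMomentMatrix μ z *ᵥ b) := by
  have hf := hD.memLp_affine A b G
  have hz : Integrable (fun ω => (u ⬝ᵥ z ω) * (A + b ⬝ᵥ z ω + G ⬝ᵥ w ω)) μ :=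
    (memLp_dotProduct hD.memLp_z u).integrable_mul hf
  have hε : Integrable (fun ω => ε ω * (A + b ⬝ᵥ z ω + G ⬝ᵥ w ω)) μ :=
    hD.memLp_noise.integrable_mul hf
  simp only [sub_mul]
  rw [integral_sub hz hε, hD.integral_noise_mul_affine, sub_zero,
    integral_dotProduct_mul fun i => (hD.memLp_z i).integrable_mul hf]
  simp only [hD.integral_z_mul_affine]

end OrthogonalDesign

end SecondMoments

section SumOfMatrices

variable {ι σ : Type*} [Fintype ι] [Fintype σ]

theorem posDef_sum_of_posSemidef_of_isUnit [DecidableEq ι] [DecidableEq σ] {M : σ → Matrix ι ι ℝ}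
    (hM : ∀ s, (M s).PosSemidef) (s₀ : σ) (hs₀ : IsUnit (M s₀)) : (∑ s, M s).PosDef := by
  rw [← Finset.add_sum_erase _ _ (Finset.mem_univ s₀)]
  exact ((hM s₀).posDef_iff_isUnit.2 hs₀).add_posSemidef
    (posSemidef_sum _ fun s _ => hM s)

theorem sum_dotProduct_mulVec_eq_zero {M : σ → Matrix ι ι ℝ}
    (hM : ∀ s, (M s).IsSymm) {β : σ → ι → ℝ} {β₀ : ι → ℝ}
    (h : (∑ s, M s) *ᵥ β₀ = ∑ s, M s *ᵥ β s) (b : ι → ℝ) :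
    ∑ s, (β₀ - β s) ⬝ᵥ (M s *ᵥ b) = 0 := by
  have hsymm : ∀ s v, v ⬝ᵥ (M s *ᵥ b) = (M s *ᵥ v) ⬝ᵥ b := fun s v => by
    rw [dotProduct_mulVec, ← vecMul_transpose, (hM s).eq]
  simp only [hsymm, mulVec_sub, sub_dotProduct, Finset.sum_sub_distrib, ← sum_dotProduct,
    ← sum_mulVec, h, sub_self]

end SumOfMatrices

namespace FEO

section Dummies

variable {ι : Type*} [Fintype ι] [DecidableEq ι]

/-- The paper's `U_i(s)`. -/
def dummy (p : ι → ℝ) (s i : ι) : ℝ := (if s = i then 1 else 0) - p i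

theorem sum_mul_dummy (p f : ι → ℝ) (s : ι) :
    ∑ i, f i * dummy p s i = f s - ∑ i, p i * f i := by
  simp [dummy, mul_sub, Finset.sum_sub_distrib, mul_comm]

theorem exists_add_sum_mul_dummy_castSucc {n : ℕ} (p φ : Fin (n + 1) → ℝ) :
    ∃ (a : ℝ) (δ : Fin n → ℝ), ∀ s, a + ∑ k, δ k * dummy p s k.castSucc = φ s := by
  refine ⟨φ (Fin.last n) + ∑ i, p i * (φ i - φ (Fin.last n)),
    fun k => φ k.castSucc - φ (Fin.last n), fun s => ?_⟩
  have h := sum_mul_dummy p (fun i => φ i - φ (Fin.last n)) s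
  rw [Fin.sum_univ_castSucc, sub_self, zero_mul, add_zero] at h
  rw [h]
  ring

end Dummies

variable {Ω : Type*} {n d e : ℕ}

def predictor (S : Ω → Fin (n + 1)) (X : Ω → Fin d → ℝ) (V : Ω → Fin e → ℝ)
    (μv : Fin (n + 1) → Fin d → ℝ) (νv : Fin (n + 1) → Fin e → ℝ) (U : Fin n → Ω → ℝ)
    (Ufull : Fin (n + 1) → Ω → ℝ) (a : ℝ) (l : Fin n → ℝ) (b : Fin d → ℝ) (g : Fin e → ℝ)
    (c : Fin (n + 1) → Fin e → ℝ) (ω : Ω) : ℝ :=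
  a + (∑ k, l k * U k ω) + b ⬝ᵥ (X ω - μv (S ω)) + g ⬝ᵥ (V ω - νv (S ω))
    + (∑ i, ∑ k, c i k * Ufull i ω * V ω k)

variable {S : Ω → Fin (n + 1)} {X : Ω → Fin d → ℝ} {V : Ω → Fin e → ℝ} {Y ε : Ω → ℝ}
  {p : Fin (n + 1) → ℝ} {μv : Fin (n + 1) → Fin d → ℝ} {νv : Fin (n + 1) → Fin e → ℝ}
  {U : Fin n → Ω → ℝ} {Ufull : Fin (n + 1) → Ω → ℝ}
  {αb : Fin (n + 1) → ℝ} {βb : Fin (n + 1) → Fin d → ℝ} {γb : Fin (n + 1) → Fin e → ℝ}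

theorem predictor_add_const (a t : ℝ) (l : Fin n → ℝ) (b : Fin d → ℝ) (g : Fin e → ℝ)
    (c : Fin (n + 1) → Fin e → ℝ) (ω : Ω) :
    predictor S X V μv νv U Ufull (a + t) l b g c ω
      = predictor S X V μv νv U Ufull a l b g c ω + t := by
  simp only [predictor]
  ring

theorem predictor_sub_predictor (a a' : ℝ) (l l' : Fin n → ℝ) (b b' : Fin d → ℝ)
    (g g' : Fin e → ℝ) (c c' : Fin (n + 1) → Fin e → ℝ) (ω : Ω) :
    predictor S X V μv νv U Ufull a l b g c ω - predictor S X V μv νv U Ufull a' l' b' g' c' ω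
      = predictor S X V μv νv U Ufull (a - a') (l - l') (b - b') (g - g') (c - c') ω := by
  simp only [predictor, sub_dotProduct, Pi.sub_apply, sub_mul, Finset.sum_sub_distrib]
  ring

theorem predictor_zero (ω : Ω) : predictor S X V μv νv U Ufull 0 0 0 0 0 ω = 0 := by
  simp [predictor]

theorem predictor_single_X (i : Fin d) (ω : Ω) :
    predictor S X V μv νv U Ufull 0 0 (Pi.single i 1) 0 0 ω = X ω i - μv (S ω) i := by
  simp [predictor]

theorem predictor_single_V (k : Fin e) (ω : Ω) :
    predictor S X V μv νv U Ufull 0 0 0 (Pi.single k 1) 0 ω = V ω k - νv (S ω) k := by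
  simp [predictor]

theorem predictor_eq_of_fiber
    (hU : ∀ i ω, U i ω = dummy p (S ω) i.castSucc) (hUfull : ∀ i ω, Ufull i ω = dummy p (S ω) i)
    (a : ℝ) (l : Fin n → ℝ) (b : Fin d → ℝ) (g : Fin e → ℝ) (c : Fin (n + 1) → Fin e → ℝ)
    {s : Fin (n + 1)} {ω : Ω} (hω : S ω = s) :
    predictor S X V μv νv U Ufull a l b g c ω
      = (a + ∑ k, l k * dummy p s k.castSucc + (fun k => ∑ i, c i k * dummy p s i) ⬝ᵥ νv s)
        + b ⬝ᵥ (X ω - μv s) + (g + fun k => ∑ i, c i k * dummy p s i) ⬝ᵥ (V ω - νv s) := by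
  simp only [predictor, hU, hUfull, hω, dotProduct, Pi.add_apply, Pi.sub_apply]
  rw [Finset.sum_comm (f := fun i k => c i k * dummy p s i * V ω k)]
  simp only [add_mul, Finset.sum_add_distrib, Finset.sum_mul, mul_sub, Finset.sum_sub_distrib]
  ring

theorem eq_affine_add_noise_of_fiber
    (hY : ∀ ω, Y ω = αb (S ω) + βb (S ω) ⬝ᵥ X ω + γb (S ω) ⬝ᵥ V ω + ε ω)
    {s : Fin (n + 1)} {ω : Ω} (hω : S ω = s) :
    Y ω = (αb s + βb s ⬝ᵥ μv s + γb s ⬝ᵥ νv s) + βb s ⬝ᵥ (X ω - μv s)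
      + γb s ⬝ᵥ (V ω - νv s) + ε ω := by
  rw [hY, hω, dotProduct_sub, dotProduct_sub]
  ring

theorem predictor_sub_eq_of_fiber (hU : ∀ i ω, U i ω = dummy p (S ω) i.castSucc)
    (hUfull : ∀ i ω, Ufull i ω = dummy p (S ω) i)
    (hY : ∀ ω, Y ω = αb (S ω) + βb (S ω) ⬝ᵥ X ω + γb (S ω) ⬝ᵥ V ω + ε ω)
    {γbar : Fin e → ℝ} (hγbar : γbar = ∑ s, p s • γb s) {a : ℝ} {δ : Fin n → ℝ}
    (ha : ∀ s, a + ∑ k, δ k * dummy p s k.castSucc = αb s + βb s ⬝ᵥ μv s + γbar ⬝ᵥ νv s)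
    (βF : Fin d → ℝ) {s : Fin (n + 1)} {ω : Ω} (hω : S ω = s) :
    predictor S X V μv νv U Ufull a δ βF γbar γb ω - Y ω
      = (βF - βb s) ⬝ᵥ (X ω - μv s) - ε ω := by
  have hslope : (fun k => ∑ i, γb i k * dummy p s i) = γb s - γbar := by
    ext k
    simp [sum_mul_dummy, hγbar, Finset.sum_apply]
  rw [predictor_eq_of_fiber hU hUfull _ _ _ _ _ hω, eq_affine_add_noise_of_fiber hY hω, ha, hslope]
  simp only [sub_dotProduct, add_dotProduct]
  ring

section Moments

variable [MeasurableSpace Ω] {P : Measure Ω}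

theorem setIntegral_fiber_congr (hS : Measurable S) {s : Fin (n + 1)} {f g : Ω → ℝ}
    (h : ∀ ω, S ω = s → f ω = g ω) :
    ∫ ω in {ω | S ω = s}, f ω ∂P = ∫ ω in {ω | S ω = s}, g ω ∂P :=
  setIntegral_congr_fun (hS (measurableSet_singleton s)) h

variable [IsFiniteMeasure P]

section SquareIntegrable

variable (hint : ∀ a l b g c,
  Integrable (fun ω => (predictor S X V μv νv U Ufull a l b g c ω - Y ω) ^ 2) P)
include hint

theorem memLp_predictor_sub (a : ℝ) (l : Fin n → ℝ) (b : Fin d → ℝ) (g : Fin e → ℝ)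
    (c : Fin (n + 1) → Fin e → ℝ) :
    MemLp (fun ω => predictor S X V μv νv U Ufull a l b g c ω - Y ω) 2 P :=
  memLp_two_of_integrable_sq (hint a l b g c) <| by
    simpa only [predictor_add_const, add_sub_right_comm] using hint (a + 1) l b g c

theorem memLp_response : MemLp Y 2 P := by
  refine (memLp_predictor_sub hint 0 0 0 0 0).neg.ae_eq (ae_of_all _ fun ω => ?_)
  simp [predictor_zero]

theorem memLp_predictor (a : ℝ) (l : Fin n → ℝ) (b : Fin d → ℝ) (g : Fin e → ℝ)
    (c : Fin (n + 1) → Fin e → ℝ) :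
    MemLp (fun ω => predictor S X V μv νv U Ufull a l b g c ω) 2 P := by
  refine ((memLp_predictor_sub hint a l b g c).add (memLp_response hint)).ae_eq
    (ae_of_all _ fun ω => ?_)
  simp

theorem memLp_centered_X (i : Fin d) : MemLp (fun ω => X ω i - μv (S ω) i) 2 P := by
  simpa only [predictor_single_X] using memLp_predictor hint 0 0 (Pi.single i 1) 0 0

theorem memLp_centered_V (k : Fin e) : MemLp (fun ω => V ω k - νv (S ω) k) 2 P := by
  simpa only [predictor_single_V] using memLp_predictor hint 0 0 0 (Pi.single k 1) 0

theorem orthogonalDesign_fiber (hS : Measurable S) {s : Fin (n + 1)} (hp : 0 ≤ p s)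
    (hmeas : P {ω | S ω = s} = ENNReal.ofReal (p s))
    (hmeanX : ∀ i, ∫ ω in {ω | S ω = s}, X ω i ∂P = p s * μv s i)
    (hXV : ∀ i j, ∫ ω in {ω | S ω = s}, (X ω i - μv s i) * (V ω j - νv s j) ∂P = 0)
    (hY : ∀ ω, Y ω = αb (S ω) + βb (S ω) ⬝ᵥ X ω + γb (S ω) ⬝ᵥ V ω + ε ω)
    (hε : ∫ ω in {ω | S ω = s}, ε ω ∂P = 0)
    (hXε : ∀ i, ∫ ω in {ω | S ω = s}, (X ω i - μv s i) * ε ω ∂P = 0)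
    (hVε : ∀ j, ∫ ω in {ω | S ω = s}, (V ω j - νv s j) * ε ω ∂P = 0) :
    OrthogonalDesign (P.restrict {ω | S ω = s}) (fun ω => X ω - μv s) (fun ω => V ω - νv s) ε := by
  have hA : MeasurableSet {ω | S ω = s} := hS (measurableSet_singleton s)
  have hz : ∀ i, MemLp (fun ω => (X ω - μv s) i) 2 (P.restrict {ω | S ω = s}) := fun i =>
    (memLp_centered_X hint i).restrict_of_eqOn hA fun ω (hω : S ω = s) => by simp [hω]
  have hw : ∀ k, MemLp (fun ω => (V ω - νv s) k) 2 (P.restrict {ω | S ω = s}) := fun k =>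
    (memLp_centered_V hint k).restrict_of_eqOn hA fun ω (hω : S ω = s) => by simp [hω]
  refine ⟨hz, hw, ?_, fun i => ?_, hXV, hε, hXε, hVε⟩
  · have hmodel := (((memLp_response hint).restrict {ω | S ω = s}).sub
      (((memLp_const (αb s + βb s ⬝ᵥ μv s + γb s ⬝ᵥ νv s)).add
        (memLp_dotProduct hz (βb s))).add (memLp_dotProduct hw (γb s))))
    refine hmodel.ae_eq ((ae_restrict_iff' hA).2 (ae_of_all _ fun ω (hω : S ω = s) => ?_))
    simp only [Pi.sub_apply, Pi.add_apply]
    rw [eq_affine_add_noise_of_fiber hY hω]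
    ring
  · have hXi : IntegrableOn (fun ω => X ω i) {ω | S ω = s} P :=
      (((hz i).integrable one_le_two).add (integrable_const (μv s i))).congr
        (ae_of_all _ fun ω => by simp)
    rw [show (fun ω => (X ω - μv s) i) = fun ω => X ω i - μv s i from rfl,
      integral_sub hXi (integrable_const _), hmeanX, setIntegral_const, measureReal_def, hmeas,
      ENNReal.toReal_ofReal hp, smul_eq_mul, sub_self]

variable (hS : Measurable S) (hD : ∀ s, OrthogonalDesign (P.restrict {ω | S ω = s})
  (fun ω => X ω - μv s) (fun ω => V ω - νv s) ε)
include hS hD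

theorem integral_centered_X (i : Fin d) : ∫ ω, (X ω i - μv (S ω) i) ∂P = 0 := by
  rw [integral_eq_sum_setIntegral_fiber hS ((memLp_centered_X hint i).integrable one_le_two)]
  refine Finset.sum_eq_zero fun s _ => ?_
  rw [setIntegral_fiber_congr hS (g := fun ω => (X ω - μv s) i) fun ω hω => by simp [hω]]
  exact (hD s).integral_z i

theorem eq_sum_secondMomentMatrix {Vc : Matrix (Fin d) (Fin d) ℝ}
    (hVc : ∀ i j, Vc i j = (∫ ω, (X ω i - μv (S ω) i) * (X ω j - μv (S ω) j) ∂P)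
      - (∫ ω, (X ω i - μv (S ω) i) ∂P) * (∫ ω, (X ω j - μv (S ω) j) ∂P)) :
    Vc = ∑ s, secondMomentMatrix (P.restrict {ω | S ω = s}) (fun ω => X ω - μv s) := by
  ext i j
  have hij : Integrable (fun ω => (X ω i - μv (S ω) i) * (X ω j - μv (S ω) j)) P :=
    (memLp_centered_X hint i).integrable_mul (memLp_centered_X hint j)
  rw [hVc, integral_centered_X hint hS hD, zero_mul, sub_zero, Matrix.sum_apply,
    integral_eq_sum_setIntegral_fiber hS hij]
  exact Finset.sum_congr rfl fun s _ => setIntegral_fiber_congr hS fun ω hω => by simp [hω]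

theorem eq_sum_secondMomentMatrix_mulVec
    (hY : ∀ ω, Y ω = αb (S ω) + βb (S ω) ⬝ᵥ X ω + γb (S ω) ⬝ᵥ V ω + ε ω) {cvY : Fin d → ℝ}
    (hcvY : ∀ i, cvY i = (∫ ω, (X ω i - μv (S ω) i) * Y ω ∂P)
      - (∫ ω, (X ω i - μv (S ω) i) ∂P) * (∫ ω, Y ω ∂P)) :
    cvY = ∑ s, secondMomentMatrix (P.restrict {ω | S ω = s}) (fun ω => X ω - μv s) *ᵥ βb s := by
  ext i
  have hiY : Integrable (fun ω => (X ω i - μv (S ω) i) * Y ω) P :=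
    (memLp_centered_X hint i).integrable_mul (memLp_response hint)
  rw [hcvY, integral_centered_X hint hS hD, zero_mul, sub_zero, Finset.sum_apply,
    integral_eq_sum_setIntegral_fiber hS hiY]
  refine Finset.sum_congr rfl fun s _ => ?_
  rw [← (hD s).integral_z_mul_affine_add_noise (αb s + βb s ⬝ᵥ μv s + γb s ⬝ᵥ νv s) (βb s) (γb s)]
  exact setIntegral_fiber_congr hS fun ω hω => by rw [eq_affine_add_noise_of_fiber hY hω, hω]; rfl

theorem integral_predictor_sub_mul_predictor (hU : ∀ i ω, U i ω = dummy p (S ω) i.castSucc)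
    (hUfull : ∀ i ω, Ufull i ω = dummy p (S ω) i)
    (hY : ∀ ω, Y ω = αb (S ω) + βb (S ω) ⬝ᵥ X ω + γb (S ω) ⬝ᵥ V ω + ε ω)
    {γbar : Fin e → ℝ} (hγbar : γbar = ∑ s, p s • γb s) {a : ℝ} {δ : Fin n → ℝ}
    (ha : ∀ s, a + ∑ k, δ k * dummy p s k.castSucc = αb s + βb s ⬝ᵥ μv s + γbar ⬝ᵥ νv s)
    (βF : Fin d → ℝ) (a' : ℝ) (l : Fin n → ℝ) (b : Fin d → ℝ) (g : Fin e → ℝ)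
    (c : Fin (n + 1) → Fin e → ℝ) :
    ∫ ω, (predictor S X V μv νv U Ufull a δ βF γbar γb ω - Y ω)
        * predictor S X V μv νv U Ufull a' l b g c ω ∂P
      = ∑ s, (βF - βb s)
          ⬝ᵥ (secondMomentMatrix (P.restrict {ω | S ω = s}) (fun ω => X ω - μv s) *ᵥ b) := by
  have hprod : Integrable (fun ω => (predictor S X V μv νv U Ufull a δ βF γbar γb ω - Y ω)
      * predictor S X V μv νv U Ufull a' l b g c ω) P :=
    (memLp_predictor_sub hint a δ βF γbar γb).integrable_mul (memLp_predictor hint a' l b g c)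
  rw [integral_eq_sum_setIntegral_fiber hS hprod]
  refine Finset.sum_congr rfl fun s _ => ?_
  rw [← (hD s).integral_residual_mul_affine _ b _ (βF - βb s)]
  exact setIntegral_fiber_congr hS fun ω hω => by
    rw [predictor_sub_eq_of_fiber hU hUfull hY hγbar ha βF hω,
      predictor_eq_of_fiber hU hUfull a' l b g c hω]

end SquareIntegrable

end Moments

end FEO

open FEO in
theorem stmt15_general
    {Ω : Type*} [MeasurableSpace Ω] (P : Measure Ω) [IsProbabilityMeasure P]
    (n d e : ℕ) (S : Ω → Fin (n + 1)) (hS : Measurable S)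
    (X : Ω → Fin d → ℝ) (V : Ω → Fin e → ℝ) (Y : Ω → ℝ) (ε : Ω → ℝ)
    (p : Fin (n + 1) → ℝ) (μv : Fin (n + 1) → Fin d → ℝ) (νv : Fin (n + 1) → Fin e → ℝ)
    (SigX : Fin (n + 1) → Matrix (Fin d) (Fin d) ℝ)
    (αb : Fin (n + 1) → ℝ) (βb : Fin (n + 1) → Fin d → ℝ) (γb : Fin (n + 1) → Fin e → ℝ)
    (hp : ∀ s, 0 < p s)
    (hmeas : ∀ s, P {ω | S ω = s} = ENNReal.ofReal (p s))
    (hmeanX : ∀ s i, ∫ ω in {ω | S ω = s}, X ω i ∂P = p s * μv s i)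
    (hcovX : ∀ s i j,
      ∫ ω in {ω | S ω = s}, (X ω i - μv s i) * (X ω j - μv s j) ∂P = p s * SigX s i j)
    -- full-rank variances and per-bank uncorrelatedness of X and V
    (hSigX : ∀ s, IsUnit (SigX s).det)
    (hXV : ∀ s i j, ∫ ω in {ω | S ω = s}, (X ω i - μv s i) * (V ω j - νv s j) ∂P = 0)
    -- bank-specific models
    (hY : ∀ ω, Y ω = αb (S ω) + βb (S ω) ⬝ᵥ X ω + γb (S ω) ⬝ᵥ V ω + ε ω)
    (hε : ∀ s, ∫ ω in {ω | S ω = s}, ε ω ∂P = 0)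
    (hXε : ∀ s i, ∫ ω in {ω | S ω = s}, (X ω i - μv s i) * ε ω ∂P = 0)
    (hVε : ∀ s j, ∫ ω in {ω | S ω = s}, (V ω j - νv s j) * ε ω ∂P = 0)
    -- centered dummies: U for i = 1,…,S̄−1, Ufull for all banks
    (U : Fin n → Ω → ℝ)
    (hU : ∀ i ω, U i ω = (if S ω = i.castSucc then 1 else 0) - p i.castSucc)
    (Ufull : Fin (n + 1) → Ω → ℝ)
    (hUfull : ∀ i ω, Ufull i ω = (if S ω = i then 1 else 0) - p i)
    (hint : ∀ (a : ℝ) (l : Fin n → ℝ) (b : Fin d → ℝ) (g : Fin e → ℝ)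
        (c : Fin (n + 1) → Fin e → ℝ),
      Integrable (fun ω => (a + (∑ k, l k * U k ω) + b ⬝ᵥ (X ω - μv (S ω))
        + g ⬝ᵥ (V ω - νv (S ω)) + (∑ i, ∑ k, c i k * Ufull i ω * V ω k) - Y ω) ^ 2) P)
    -- β_F = var[X_S − μ_S]⁻¹ cov[X_S − μ_S, Y_S]
    (Vc : Matrix (Fin d) (Fin d) ℝ)
    (hVc : ∀ i j, Vc i j =
      (∫ ω, (X ω i - μv (S ω) i) * (X ω j - μv (S ω) j) ∂P)
        - (∫ ω, (X ω i - μv (S ω) i) ∂P) * (∫ ω, (X ω j - μv (S ω) j) ∂P))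
    (cvY : Fin d → ℝ)
    (hcvY : ∀ i, cvY i =
      (∫ ω, (X ω i - μv (S ω) i) * Y ω ∂P)
        - (∫ ω, (X ω i - μv (S ω) i) ∂P) * (∫ ω, Y ω ∂P))
    (βF : Fin d → ℝ) (hβF : βF = Vc⁻¹ *ᵥ cvY)
    -- average treatment effect
    (γbar : Fin e → ℝ) (hγbar : γbar = ∑ s, p s • γb s) :
    -- βF and γ̄ are the X- and V-coefficients of the least-squares projection
    ∃ (a : ℝ) (δ : Fin n → ℝ) (c : Fin (n + 1) → Fin e → ℝ),
      ∀ (a' : ℝ) (l : Fin n → ℝ) (b : Fin d → ℝ) (g : Fin e → ℝ)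
        (c' : Fin (n + 1) → Fin e → ℝ),
        ∫ ω, (a + (∑ k, δ k * U k ω) + βF ⬝ᵥ (X ω - μv (S ω))
            + γbar ⬝ᵥ (V ω - νv (S ω)) + (∑ i, ∑ k, c i k * Ufull i ω * V ω k) - Y ω) ^ 2 ∂P
          ≤ ∫ ω, (a' + (∑ k, l k * U k ω) + b ⬝ᵥ (X ω - μv (S ω))
            + g ⬝ᵥ (V ω - νv (S ω)) + (∑ i, ∑ k, c' i k * Ufull i ω * V ω k) - Y ω) ^ 2 ∂P := by
  have hD s := orthogonalDesign_fiber hint hS (hp s).le (hmeas s) (hmeanX s) (hXV s) hY (hε s)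
    (hXε s) (hVε s)
  set M := fun s => secondMomentMatrix (P.restrict {ω | S ω = s}) (fun ω => X ω - μv s)
  have hM s : (M s).PosSemidef := posSemidef_secondMomentMatrix (hD s).memLp_z
  have hM₀ : IsUnit (M 0) := by
    have hM₀_eq : M 0 = p 0 • SigX 0 := by ext i j; exact hcovX 0 i j
    rw [hM₀_eq, isUnit_iff_isUnit_det, det_smul]
    exact ((hp 0).ne'.isUnit.pow _).mul (hSigX 0)
  have hVcM := eq_sum_secondMomentMatrix hint hS hD hVc
  have hVc_unit : IsUnit Vc.det :=
    (isUnit_iff_isUnit_det _).1 (hVcM ▸ (posDef_sum_of_posSemidef_of_isUnit hM 0 hM₀).isUnit)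
  have hnormal : (∑ s, M s) *ᵥ βF = ∑ s, M s *ᵥ βb s := by
    rw [← hVcM, ← eq_sum_secondMomentMatrix_mulVec hint hS hD hY hcvY, hβF, mulVec_mulVec,
      mul_nonsing_inv _ hVc_unit, one_mulVec]
  obtain ⟨a, δ, ha⟩ :=
    exists_add_sum_mul_dummy_castSucc p fun s => αb s + βb s ⬝ᵥ μv s + γbar ⬝ᵥ νv s
  refine ⟨a, δ, γb, fun a' l b g c => ?_⟩
  have horth := integral_predictor_sub_mul_predictor hint hS hD hU hUfull hY hγbar ha βF
    (a' - a) (l - δ) (b - βF) (g - γbar) (c - γb)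
  rw [sum_dotProduct_mulVec_eq_zero (fun s => isHermitian_iff_isSymm.1 (hM s).isHermitian)
    hnormal] at horth
  have hle := integral_sq_le_integral_add_sq (memLp_predictor_sub hint a δ βF γbar γb)
    (memLp_predictor hint _ _ _ _ _) horth
  simp only [← predictor_sub_predictor, sub_add_sub_cancel'] at hle
  exact hle

/-- Extended FEO with interactions: in the projection of `Y_S` onto
`{1, U_1(S),…,U_{S̄−1}(S), X_S − μ_S, V_S − ν_S, U_1(S)V_S,…,U_S̄(S)V_S}`, the coefficient
of `X_S − μ_S` equals `β_F = var[X_S − μ_S]⁻¹ cov[X_S − μ_S, Y_S]` and the coefficient of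
`V_S − ν_S` equals the average treatment effect `γ̄ = Σ_s p_s γ_s`. -/
theorem stmt15
    {Ω : Type*} [MeasurableSpace Ω] (P : Measure Ω) [IsProbabilityMeasure P]
    (n d e : ℕ) (S : Ω → Fin (n + 1)) (hS : Measurable S)
    (X : Ω → Fin d → ℝ) (V : Ω → Fin e → ℝ) (Y : Ω → ℝ) (ε : Ω → ℝ)
    (p : Fin (n + 1) → ℝ) (μv : Fin (n + 1) → Fin d → ℝ) (νv : Fin (n + 1) → Fin e → ℝ)
    (SigX : Fin (n + 1) → Matrix (Fin d) (Fin d) ℝ)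
    (SigV : Fin (n + 1) → Matrix (Fin e) (Fin e) ℝ)
    (αb : Fin (n + 1) → ℝ) (βb : Fin (n + 1) → Fin d → ℝ) (γb : Fin (n + 1) → Fin e → ℝ)
    (hp : ∀ s, 0 < p s)
    (hmeas : ∀ s, P {ω | S ω = s} = ENNReal.ofReal (p s))
    (hmeanX : ∀ s i, ∫ ω in {ω | S ω = s}, X ω i ∂P = p s * μv s i)
    (hmeanV : ∀ s j, ∫ ω in {ω | S ω = s}, V ω j ∂P = p s * νv s j)
    (hcovX : ∀ s i j,
      ∫ ω in {ω | S ω = s}, (X ω i - μv s i) * (X ω j - μv s j) ∂P = p s * SigX s i j)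
    (hcovV : ∀ s i j,
      ∫ ω in {ω | S ω = s}, (V ω i - νv s i) * (V ω j - νv s j) ∂P = p s * SigV s i j)
    -- full-rank variances and per-bank uncorrelatedness of X and V
    (hSigX : ∀ s, IsUnit (SigX s).det) (hSigV : ∀ s, IsUnit (SigV s).det)
    (hXV : ∀ s i j, ∫ ω in {ω | S ω = s}, (X ω i - μv s i) * (V ω j - νv s j) ∂P = 0)
    -- bank-specific models
    (hY : ∀ ω, Y ω = αb (S ω) + βb (S ω) ⬝ᵥ X ω + γb (S ω) ⬝ᵥ V ω + ε ω)
    (hε : ∀ s, ∫ ω in {ω | S ω = s}, ε ω ∂P = 0)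
    (hXε : ∀ s i, ∫ ω in {ω | S ω = s}, (X ω i - μv s i) * ε ω ∂P = 0)
    (hVε : ∀ s j, ∫ ω in {ω | S ω = s}, (V ω j - νv s j) * ε ω ∂P = 0)
    -- centered dummies: U for i = 1,…,S̄−1, Ufull for all banks
    (U : Fin n → Ω → ℝ)
    (hU : ∀ i ω, U i ω = (if S ω = i.castSucc then 1 else 0) - p i.castSucc)
    (Ufull : Fin (n + 1) → Ω → ℝ)
    (hUfull : ∀ i ω, Ufull i ω = (if S ω = i then 1 else 0) - p i)
    (hint : ∀ (a : ℝ) (l : Fin n → ℝ) (b : Fin d → ℝ) (g : Fin e → ℝ)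
        (c : Fin (n + 1) → Fin e → ℝ),
      Integrable (fun ω => (a + (∑ k, l k * U k ω) + b ⬝ᵥ (X ω - μv (S ω))
        + g ⬝ᵥ (V ω - νv (S ω)) + (∑ i, ∑ k, c i k * Ufull i ω * V ω k) - Y ω) ^ 2) P)
    -- β_F = var[X_S − μ_S]⁻¹ cov[X_S − μ_S, Y_S]
    (Vc : Matrix (Fin d) (Fin d) ℝ)
    (hVc : ∀ i j, Vc i j =
      (∫ ω, (X ω i - μv (S ω) i) * (X ω j - μv (S ω) j) ∂P)
        - (∫ ω, (X ω i - μv (S ω) i) ∂P) * (∫ ω, (X ω j - μv (S ω) j) ∂P))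
    (cvY : Fin d → ℝ)
    (hcvY : ∀ i, cvY i =
      (∫ ω, (X ω i - μv (S ω) i) * Y ω ∂P)
        - (∫ ω, (X ω i - μv (S ω) i) ∂P) * (∫ ω, Y ω ∂P))
    (βF : Fin d → ℝ) (hβF : βF = Vc⁻¹ *ᵥ cvY)
    -- average treatment effect
    (γbar : Fin e → ℝ) (hγbar : γbar = ∑ s, p s • γb s) :
    -- βF and γ̄ are the X- and V-coefficients of the least-squares projection
    ∃ (a : ℝ) (δ : Fin n → ℝ) (c : Fin (n + 1) → Fin e → ℝ),
      ∀ (a' : ℝ) (l : Fin n → ℝ) (b : Fin d → ℝ) (g : Fin e → ℝ)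
        (c' : Fin (n + 1) → Fin e → ℝ),
        ∫ ω, (a + (∑ k, δ k * U k ω) + βF ⬝ᵥ (X ω - μv (S ω))
            + γbar ⬝ᵥ (V ω - νv (S ω)) + (∑ i, ∑ k, c i k * Ufull i ω * V ω k) - Y ω) ^ 2 ∂P
          ≤ ∫ ω, (a' + (∑ k, l k * U k ω) + b ⬝ᵥ (X ω - μv (S ω))
            + g ⬝ᵥ (V ω - νv (S ω)) + (∑ i, ∑ k, c' i k * Ufull i ω * V ω k) - Y ω) ^ 2 ∂P :=
  stmt15_general P n d e S hS X V Y ε p μv νv SigX αb βb γb hp hmeas hmeanX hcovX hSigX hXV hY hε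
    hXε hVε U hU Ufull hUfull hint Vc hVc cvY hcvY βF hβF γbar hγbar
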